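/- With λ(θ) the inverse of θ(λ) = -1 + Artanh(√(1-4λ))/√(1-4λ), and f(θ) = -log λ(θ) - 2θ - θ log(1-4λ(θ)), the identity λ(θ) = exp(-2θ - f(θ) + θ f'(θ)) holds for all θ > 0. -/

import Mathlib

open Real Filter Set

noncomputable def artanh (x : ℝ) : ℝ := (1/2) * Real.log ((1+x)/(1-x))

noncomputable def thetaF (l : ℝ) : ℝ := -1 + _root_.artanh (Real.sqrt (1-4*l)) / Real.sqrt (1-4*l)

/-!
Differentiating `f` gives `f' = -λ'/λ - 2 - log (1 - 4λ) + 4θλ'/(1 - 4λ)`. By the inverse function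
rule `λ' = 1/θ'(λ)`, and `θ'(λ) = (4λ(θ + 1) - 1) / (2λ(1 - 4λ))`, so all terms but
`-log (1 - 4λ)` cancel. Hence `-2θ - f + θ f' = log λ`. The analytic input is that `λ` is
differentiable: `θ` is strictly decreasing with nonvanishing derivative because
`artanh s < s / (1 - s²)` on `(0, 1)`, so its inverse `λ` is continuous, hence differentiable.
-/

open Topology

theorem continuousAt_of_local_left_inverse_of_strictAntiOn {f g : ℝ → ℝ} {s t : Set ℝ} {a : ℝ}
    (hf : StrictAntiOn f s) (hfc : ContinuousAt f (g a)) (hs : s ∈ 𝓝 (g a)) (ht : t ∈ 𝓝 a)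
    (hgt : MapsTo g t s) (hfg : ∀ y ∈ t, f (g y) = y) : ContinuousAt g a := by
  have hg : StrictAntiOn g t := fun x hx y hy hxy => by
    rwa [← hf.lt_iff_gt (hgt hx) (hgt hy), hfg x hx, hfg y hy]
  have hpre : f ⁻¹' t ∈ 𝓝 (g a) := hfc.preimage_mem_nhds (by rwa [hfg a (mem_of_mem_nhds ht)])
  have himage : g '' t ∈ 𝓝 (g a) :=
    mem_of_superset (inter_mem hs hpre) fun l ⟨hls, hlt⟩ =>
      ⟨f l, hlt, hf.injOn (hgt hlt) hls (hfg _ hlt)⟩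
  exact hg.dual_right.continuousAt_of_image_mem_nhds ht himage

theorem hasDerivAt_artanh {x : ℝ} (h₁ : -1 < x) (h₂ : x < 1) :
    HasDerivAt _root_.artanh (1 / (1 - x ^ 2)) x := by
  have hp : HasDerivAt (fun y : ℝ => 1 + y) 1 x := (hasDerivAt_id x).const_add 1
  have hm : HasDerivAt (fun y : ℝ => 1 - y) (-1) x := by
    simpa using (hasDerivAt_id x).const_sub 1
  have hlog := ((hp.log (by linarith)).sub (hm.log (by linarith))).const_mul (1 / 2)
  have heq : (fun y => 1 / 2 * (log (1 + y) - log (1 - y))) =ᶠ[𝓝 x] _root_.artanh := by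
    filter_upwards [Ioo_mem_nhds h₁ h₂] with y hy
    rw [_root_.artanh, log_div (by linarith [hy.1]) (by linarith [hy.2])]
  refine (hlog.congr_of_eventuallyEq heq.symm).congr_deriv ?_
  have : (1 : ℝ) + x ≠ 0 := by linarith
  have : (1 : ℝ) - x ≠ 0 := by linarith
  have : (1 : ℝ) - x ^ 2 ≠ 0 := by nlinarith
  field_simp
  ring

theorem artanh_lt_div_one_sub_sq {s : ℝ} (h₀ : 0 < s) (h₁ : s < 1) :
    _root_.artanh s < s / (1 - s ^ 2) := by
  have hx : 1 < (1 + s) / (1 - s) := by rw [one_lt_div] <;> linarith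
  -- `log x < sinh (log x) = (x - x⁻¹) / 2` at `x = (1 + s) / (1 - s)`
  have hlt := self_lt_sinh_iff.2 (log_pos hx)
  rw [sinh_log (by linarith)] at hlt
  have : (1 : ℝ) - s ≠ 0 := by linarith
  have : (1 : ℝ) + s ≠ 0 := by linarith
  have : (1 : ℝ) - s ^ 2 ≠ 0 := by nlinarith
  have hx' : ((1 + s) / (1 - s) - ((1 + s) / (1 - s))⁻¹) / 2 = 2 * (s / (1 - s ^ 2)) := by
    field_simp
    ring
  rw [_root_.artanh]
  linarith

theorem sqrt_one_sub_four_mul_mem_Ioo {l : ℝ} (hl : l ∈ Ioo (0 : ℝ) (1 / 4)) :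
    √(1 - 4 * l) ∈ Ioo (0 : ℝ) 1 :=
  ⟨sqrt_pos.2 (by linarith [hl.2]), (sqrt_lt' one_pos).2 (by linarith [hl.1])⟩

theorem artanh_sqrt_eq_mul_thetaF_add_one {l : ℝ} (hl : l < 1 / 4) :
    _root_.artanh √(1 - 4 * l) = √(1 - 4 * l) * (thetaF l + 1) := by
  have : √(1 - 4 * l) ≠ 0 := (sqrt_pos.2 (by linarith)).ne'
  rw [thetaF]
  field_simp
  ring

theorem four_mul_mul_thetaF_add_one_lt_one {l : ℝ} (hl : l ∈ Ioo (0 : ℝ) (1 / 4)) :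
    4 * l * (thetaF l + 1) < 1 := by
  obtain ⟨hs₀, hs₁⟩ := sqrt_one_sub_four_mul_mem_Ioo hl
  have hlt := artanh_lt_div_one_sub_sq hs₀ hs₁
  rw [artanh_sqrt_eq_mul_thetaF_add_one hl.2, sq_sqrt (by linarith [hl.2]),
    lt_div_iff₀ (by linarith [hl.1])] at hlt
  nlinarith

theorem hasDerivAt_thetaF {l : ℝ} (hl : l ∈ Ioo (0 : ℝ) (1 / 4)) :
    HasDerivAt thetaF ((4 * l * (thetaF l + 1) - 1) / (2 * l * (1 - 4 * l))) l := by
  obtain ⟨hs₀, hs₁⟩ := sqrt_one_sub_four_mul_mem_Ioo hl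
  have hs₂ : √(1 - 4 * l) ^ 2 = 1 - 4 * l := sq_sqrt (by linarith [hl.2])
  have hA := artanh_sqrt_eq_mul_thetaF_add_one hl.2
  set s := √(1 - 4 * l)
  have hu : HasDerivAt (fun x : ℝ => 1 - 4 * x) (-4) l := by
    simpa using ((hasDerivAt_id l).const_mul 4).const_sub 1
  have hsqrt : HasDerivAt (fun x : ℝ => √(1 - 4 * x)) (-4 / (2 * s)) l :=
    hu.sqrt (by linarith [hl.2])
  have hart := (hasDerivAt_artanh (by linarith) hs₁).comp l hsqrt
  have hθ : HasDerivAt thetaF _ l := (hart.div hsqrt hs₀.ne').const_add (-1)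
  refine hθ.congr_deriv ?_
  rw [Function.comp_apply, hA, hs₂]
  have : 1 - 4 * l ≠ 0 := by linarith [hl.2]
  have : l ≠ 0 := hl.1.ne'
  field_simp
  ring

theorem strictAntiOn_thetaF : StrictAntiOn thetaF (Ioo 0 (1 / 4)) := by
  refine strictAntiOn_of_deriv_neg (convex_Ioo 0 (1 / 4))
    (fun l hl => (hasDerivAt_thetaF hl).continuousAt.continuousWithinAt) fun l hl => ?_
  rw [interior_Ioo] at hl
  rw [(hasDerivAt_thetaF hl).deriv]
  exact div_neg_of_neg_of_pos (by linarith [four_mul_mul_thetaF_add_one_lt_one hl])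
    (by nlinarith [hl.1, hl.2])

theorem hasDerivAt_of_thetaF_left_inverse {lam : ℝ → ℝ}
    (hmem : ∀ θ > (0 : ℝ), lam θ ∈ Ioo (0 : ℝ) (1 / 4)) (hinv : ∀ θ > (0 : ℝ), thetaF (lam θ) = θ)
    {θ : ℝ} (hθ : 0 < θ) :
    HasDerivAt lam (2 * lam θ * (1 - 4 * lam θ) / (4 * lam θ * (θ + 1) - 1)) θ := by
  have hl := hmem θ hθ
  have hD := hasDerivAt_thetaF hl
  have hlt := four_mul_mul_thetaF_add_one_lt_one hl
  rw [hinv θ hθ] at hD hlt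
  have hcont : ContinuousAt lam θ :=
    continuousAt_of_local_left_inverse_of_strictAntiOn strictAntiOn_thetaF
      hD.continuousAt (Ioo_mem_nhds hl.1 hl.2) (Ioi_mem_nhds hθ) hmem hinv
  have hD' := hD.of_local_left_inverse hcont
    (div_neg_of_neg_of_pos (by linarith) (by nlinarith [hl.1, hl.2])).ne
    (eventually_of_mem (Ioi_mem_nhds hθ) hinv)
  rwa [inv_div] at hD'

theorem hasDerivAt_neg_log_sub_mul_log {lam : ℝ → ℝ} {θ L : ℝ}
    (hl : lam θ ∈ Ioo (0 : ℝ) (1 / 4)) (hlam : HasDerivAt lam L θ)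
    (hL : L * (4 * lam θ * (θ + 1) - 1) = 2 * lam θ * (1 - 4 * lam θ)) :
    HasDerivAt (fun t => -log (lam t) - 2 * t - t * log (1 - 4 * lam t))
      (-log (1 - 4 * lam θ)) θ := by
  have hl₀ : lam θ ≠ 0 := hl.1.ne'
  have hu₀ : 1 - 4 * lam θ ≠ 0 := by linarith [hl.2]
  have hu : HasDerivAt (fun t => 1 - 4 * lam t) (-(4 * L)) θ := (hlam.const_mul 4).const_sub 1
  have hf := ((hlam.log hl₀).neg.sub ((hasDerivAt_id θ).const_mul 2)).sub
    ((hasDerivAt_id θ).mul (hu.log hu₀))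
  have hcancel : L / lam θ + 2 = θ * (4 * L) / (1 - 4 * lam θ) := by
    rw [div_add' _ _ _ hl₀, div_eq_div_iff hl₀ hu₀]
    linear_combination -hL
  refine hf.congr_deriv ?_
  simp only [id_eq, mul_neg, neg_div]
  linear_combination -hcancel

theorem stmt9 (lam : ℝ → ℝ)
    (hmem : ∀ θ > (0:ℝ), lam θ ∈ Set.Ioo (0:ℝ) (1/4))
    (hinv : ∀ θ > (0:ℝ), thetaF (lam θ) = θ)
    (f : ℝ → ℝ)
    (hf : ∀ θ, f θ = -Real.log (lam θ) - 2*θ - θ * Real.log (1 - 4 * lam θ)) :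
    ∀ θ > (0:ℝ), lam θ = Real.exp (-2*θ - f θ + θ * deriv f θ) := by
  intro θ hθ
  have hl := hmem θ hθ
  have hlt := four_mul_mul_thetaF_add_one_lt_one hl
  rw [hinv θ hθ] at hlt
  have hf' : HasDerivAt f (-log (1 - 4 * lam θ)) θ := by
    rw [funext hf]
    exact hasDerivAt_neg_log_sub_mul_log hl (hasDerivAt_of_thetaF_left_inverse hmem hinv hθ)
      (div_mul_cancel₀ _ (by linarith))
  rw [hf'.deriv, hf θ]
  conv_lhs => rw [← exp_log hl.1]
  congr 1
  ring
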